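/- arXiv:2111.10514 — 6 statements merged into one kernel-verified Lean document; each statement's English description precedes it below -/
import Mathlib

section
/- In the n-dimensional folded hypercube FQ_n with n ≥ 4, any two distinct vertices that have a common neighbor have exactly two common neighbors. -/
/-- Number of coordinates in which two vertices of the cube differ (Hamming distance). -/
def diffCount {n : ℕ} (x y : Fin n → Bool) : ℕ :=
  (Finset.univ.filter fun i => x i ≠ y i).card

lemma diffCount_comm {n : ℕ} (x y : Fin n → Bool) : diffCount x y = diffCount y x := by
  unfold diffCount
  congr 1
  apply Finset.filter_congr
  intro i _
  exact ne_comm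

/-- The `n`-dimensional hypercube. -/
def Qn (n : ℕ) : SimpleGraph (Fin n → Bool) where
  Adj x y := diffCount x y = 1
  symm := ⟨by intro x y h; rw [diffCount_comm]; exact h⟩
  loopless := ⟨by intro x h; simp [diffCount] at h⟩

/-- The `n`-dimensional folded hypercube. -/
def FQn (n : ℕ) : SimpleGraph (Fin n → Bool) where
  Adj x y := x ≠ y ∧ (diffCount x y = 1 ∨ diffCount x y = n)
  symm := ⟨by
    rintro x y ⟨h1, h2⟩
    exact ⟨h1.symm, by rw [diffCount_comm]; exact h2⟩⟩
  loopless := ⟨fun x h => h.1 rfl⟩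

/-- Flip bit `i` (hypercube neighbour `u^{i+1}` in 1-based notation). -/
def hFlip {n : ℕ} (u : Fin n → Bool) (i : Fin n) : Fin n → Bool :=
  fun j => if j = i then !(u j) else u j

/-- Flip bits `0,…,i` (complement neighbour `ū^{i+1}` in 1-based notation). -/
def cFlip {n : ℕ} (u : Fin n → Bool) (i : Fin n) : Fin n → Bool :=
  fun j => if j ≤ i then !(u j) else u j

lemma hFlip_hFlip {n : ℕ} (u : Fin n → Bool) (i : Fin n) : hFlip (hFlip u i) i = u := by
  funext j; simp only [hFlip]; split <;> simp

lemma cFlip_cFlip {n : ℕ} (u : Fin n → Bool) (i : Fin n) : cFlip (cFlip u i) i = u := by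
  funext j; simp only [cFlip]; split <;> simp

/-- The `n`-dimensional augmented cube. -/
def AQn (n : ℕ) : SimpleGraph (Fin n → Bool) where
  Adj x y := x ≠ y ∧ ((∃ i, y = hFlip x i) ∨ (∃ i : Fin n, 1 ≤ i.val ∧ y = cFlip x i))
  symm := ⟨by
    rintro x y ⟨h1, h2⟩
    refine ⟨h1.symm, ?_⟩
    rcases h2 with ⟨i, rfl⟩ | ⟨i, hi, rfl⟩
    · exact Or.inl ⟨i, (hFlip_hFlip x i).symm⟩
    · exact Or.inr ⟨i, hi, (cFlip_cFlip x i).symm⟩⟩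
  loopless := ⟨fun x h => h.1 rfl⟩

/-!
`FQ_n` is the Cayley graph of `((ℤ/2)ⁿ, +)` with connection set `{e₁, …, eₙ, 𝟙}`: identifying a
vertex `w` with the set `diffSet u w` of coordinates where it differs from a base vertex `u`,
addition becomes symmetric difference and `w ~ w'` iff `diffSet w w'` is a singleton or
everything. So the common neighbours of `u ≠ v` correspond to the ways of writing `diffSet u v`
as `A ∆ B` with `A`, `B` generators. Four distinct generators never have symmetric difference
`∅` when `n ≥ 4`, so such a decomposition is unique up to order, and a common neighbour `w` has exactly one partner: the fourth vertex
`u + v + w` of the square `u, w, v`.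
-/

open Finset
open scoped symmDiff

section
variable {n : ℕ}

def diffSet (x y : Fin n → Bool) : Finset (Fin n) := {i | x i ≠ y i}

@[simp]
lemma mem_diffSet {x y : Fin n → Bool} {i : Fin n} : i ∈ diffSet x y ↔ x i ≠ y i := by
  simp [diffSet]

lemma card_diffSet (x y : Fin n → Bool) : #(diffSet x y) = diffCount x y := rfl

lemma diffSet_eq_empty {x y : Fin n → Bool} : diffSet x y = ∅ ↔ x = y := by
  simp [diffSet, filter_eq_empty_iff, funext_iff]

lemma diffSet_symmDiff_diffSet (x y z : Fin n → Bool) :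
    diffSet x y ∆ diffSet y z = diffSet x z := by
  ext i
  simp only [mem_symmDiff, mem_diffSet]
  cases x i <;> cases y i <;> cases z i <;> decide

lemma diffSet_right_injective (x : Fin n → Bool) : Function.Injective (diffSet x) := by
  intro y z h
  rw [← diffSet_eq_empty, ← diffSet_symmDiff_diffSet y x z, ← h, diffSet_symmDiff_diffSet,
    diffSet_eq_empty]

def IsFoldedGen (A : Finset (Fin n)) : Prop := (∃ a, A = {a}) ∨ A = univ

lemma FQn_adj_iff (hn : 0 < n) {x y : Fin n → Bool} :
    (FQn n).Adj x y ↔ IsFoldedGen (diffSet x y) := by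
  have huniv : #(diffSet x y) = n ↔ diffSet x y = univ := by
    rw [← card_eq_iff_eq_univ, Fintype.card_fin]
  change x ≠ y ∧ _ ↔ _
  rw [← card_diffSet, card_eq_one, huniv, Ne, ← diffSet_eq_empty, IsFoldedGen]
  refine ⟨And.right, fun h => ⟨?_, h⟩⟩
  rcases h with ⟨a, h⟩ | h <;> rw [h]
  · exact singleton_ne_empty a
  · exact univ_nonempty_iff.mpr ⟨⟨0, hn⟩⟩ |>.ne_empty

namespace IsFoldedGen

variable {A B C D : Finset (Fin n)}

lemma exists_mem_notMem (hn : 4 ≤ n) (hA : IsFoldedGen A) (hB : IsFoldedGen B)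
    (hC : IsFoldedGen C) (hD : IsFoldedGen D) (hAB : A ≠ B) (hAC : A ≠ C) (hAD : A ≠ D)
    (hB' : B ≠ univ) (hC' : C ≠ univ) (hD' : D ≠ univ) :
    ∃ x ∈ A, x ∉ B ∧ x ∉ C ∧ x ∉ D := by
  obtain ⟨b, rfl⟩ := hB.resolve_right hB'
  obtain ⟨c, rfl⟩ := hC.resolve_right hC'
  obtain ⟨d, rfl⟩ := hD.resolve_right hD'
  rcases hA with ⟨a, rfl⟩ | rfl
  · rw [Ne, singleton_inj] at hAB hAC hAD
    exact ⟨a, mem_singleton_self a, by simpa only [mem_singleton] using ⟨hAB, hAC, hAD⟩⟩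
  · have hcard : #{b, c, d} < #(univ : Finset (Fin n)) := by
      rw [card_univ, Fintype.card_fin]
      exact card_le_three.trans_lt (by omega)
    obtain ⟨x, -, hx⟩ := exists_mem_notMem_of_card_lt_card hcard
    exact ⟨x, mem_univ x, by simpa only [mem_insert, mem_singleton, not_or] using hx⟩

/-- Some coordinate lies in exactly one of four distinct generators: a coordinate outside three
singletons if `univ` is among them, else the element of any one of them. -/
lemma symmDiff_symmDiff_symmDiff_nonempty (hn : 4 ≤ n) (hA : IsFoldedGen A)
    (hB : IsFoldedGen B) (hC : IsFoldedGen C) (hD : IsFoldedGen D) (hAB : A ≠ B) (hAC : A ≠ C)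
    (hAD : A ≠ D) (hBC : B ≠ C) (hBD : B ≠ D) (hCD : C ≠ D) : (A ∆ B ∆ C ∆ D).Nonempty := by
  by_cases hA' : A = univ
  · subst hA'
    obtain ⟨x, hxA, hxB, hxC, hxD⟩ :=
      hA.exists_mem_notMem hn hB hC hD hAB hAC hAD hAB.symm hAC.symm hAD.symm
    exact ⟨x, by simp [mem_symmDiff, hxA, hxB, hxC, hxD]⟩
  by_cases hB' : B = univ
  · subst hB'
    obtain ⟨x, hxB, hxA, hxC, hxD⟩ :=
      hB.exists_mem_notMem hn hA hC hD hAB.symm hBC hBD hA' hBC.symm hBD.symm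
    exact ⟨x, by simp [mem_symmDiff, hxA, hxB, hxC, hxD]⟩
  by_cases hC' : C = univ
  · subst hC'
    obtain ⟨x, hxC, hxA, hxB, hxD⟩ :=
      hC.exists_mem_notMem hn hA hB hD hAC.symm hBC.symm hCD hA' hB' hCD.symm
    exact ⟨x, by simp [mem_symmDiff, hxA, hxB, hxC, hxD]⟩
  obtain ⟨x, hxD, hxA, hxB, hxC⟩ :=
    hD.exists_mem_notMem hn hA hB hC hAD.symm hBD.symm hCD.symm hA' hB' hC'
  exact ⟨x, by simp [mem_symmDiff, hxA, hxB, hxC, hxD]⟩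

lemma eq_or_eq_of_symmDiff_eq (hn : 4 ≤ n) (hA : IsFoldedGen A) (hB : IsFoldedGen B)
    (hC : IsFoldedGen C) (hD : IsFoldedGen D) (hAB : A ≠ B) (h : A ∆ B = C ∆ D) :
    C = A ∨ C = B := by
  by_contra! hC'
  obtain ⟨hCA, hCB⟩ := hC'
  have hDA : D ≠ A := by
    rintro rfl
    rw [symmDiff_comm C] at h
    exact hCB (symmDiff_right_inj.mp h).symm
  have hDB : D ≠ B := by
    rintro rfl
    exact hCA (symmDiff_left_inj.mp h).symm
  have hCD : C ≠ D := by
    rintro rfl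
    rw [symmDiff_self] at h
    exact hAB (symmDiff_eq_bot.mp h)
  have hempty : A ∆ B ∆ C ∆ D = ∅ := by
    rw [symmDiff_assoc (A ∆ B), h, symmDiff_self, bot_eq_empty]
  exact (hA.symmDiff_symmDiff_symmDiff_nonempty hn hB hC hD hAB hCA.symm hDA.symm hCB.symm
    hDB.symm hCD).ne_empty hempty

end IsFoldedGen

/-- The vertex `u + v + w` completing the square `u, w, v` in `(ℤ/2)ⁿ`. -/
def oppositeVertex (u v w : Fin n → Bool) : Fin n → Bool := fun i => xor (xor (u i) (v i)) (w i)

section oppositeVertex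
variable (u v w : Fin n → Bool)

lemma diffSet_oppositeVertex_left : diffSet u (oppositeVertex u v w) = diffSet w v := by
  ext i
  simp only [mem_diffSet, oppositeVertex]
  cases u i <;> cases v i <;> cases w i <;> decide

lemma diffSet_oppositeVertex_right : diffSet (oppositeVertex u v w) v = diffSet u w := by
  ext i
  simp only [mem_diffSet, oppositeVertex]
  cases u i <;> cases v i <;> cases w i <;> decide

lemma diffSet_self_oppositeVertex : diffSet w (oppositeVertex u v w) = diffSet u v := by
  ext i
  simp only [mem_diffSet, oppositeVertex]
  cases u i <;> cases v i <;> cases w i <;> decide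

variable {u v}

lemma ne_oppositeVertex (huv : u ≠ v) : w ≠ oppositeVertex u v w := by
  intro h
  apply huv
  rw [← diffSet_eq_empty, ← diffSet_self_oppositeVertex u v w, ← h, diffSet_eq_empty]

end oppositeVertex

lemma FQn_mem_commonNeighbors_iff (hn : 0 < n) {u v w : Fin n → Bool} :
    w ∈ (FQn n).commonNeighbors u v ↔ IsFoldedGen (diffSet u w) ∧ IsFoldedGen (diffSet w v) := by
  rw [SimpleGraph.mem_commonNeighbors, (FQn n).adj_comm v, FQn_adj_iff hn, FQn_adj_iff hn]

theorem FQn_commonNeighbors_eq_pair (hn : 4 ≤ n) {u v w : Fin n → Bool} (huv : u ≠ v)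
    (hw : w ∈ (FQn n).commonNeighbors u v) :
    (FQn n).commonNeighbors u v = {w, oppositeVertex u v w} := by
  have hn0 : 0 < n := by omega
  obtain ⟨hA, hB⟩ := (FQn_mem_commonNeighbors_iff hn0).mp hw
  have hAB : diffSet u w ≠ diffSet w v := by
    rw [← diffSet_oppositeVertex_left u v w]
    exact (diffSet_right_injective u).ne (ne_oppositeVertex w huv)
  ext w'
  rw [FQn_mem_commonNeighbors_iff hn0, Set.mem_insert_iff, Set.mem_singleton_iff]
  constructor
  · rintro ⟨hC, hD⟩
    have hsplit : diffSet u w ∆ diffSet w v = diffSet u w' ∆ diffSet w' v := by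
      rw [diffSet_symmDiff_diffSet, diffSet_symmDiff_diffSet]
    rcases hA.eq_or_eq_of_symmDiff_eq hn hB hC hD hAB hsplit with h | h
    · exact Or.inl (diffSet_right_injective u h)
    · rw [← diffSet_oppositeVertex_left u v w] at h
      exact Or.inr (diffSet_right_injective u h)
  · rintro (rfl | rfl)
    · exact ⟨hA, hB⟩
    · rw [diffSet_oppositeVertex_left, diffSet_oppositeVertex_right]
      exact ⟨hB, hA⟩

end

/-- in `FQ_n` (`n ≥ 4`) any two distinct vertices with a common neighbour
have exactly two common neighbours. -/
theorem stmt1 (n : ℕ) (hn : 4 ≤ n) (u v : Fin n → Bool) (huv : u ≠ v)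
    (h : ((FQn n).neighborSet u ∩ (FQn n).neighborSet v).Nonempty) :
    ((FQn n).neighborSet u ∩ (FQn n).neighborSet v).ncard = 2 := by
  obtain ⟨w, hw⟩ := h
  rw [← SimpleGraph.commonNeighbors_eq] at hw ⊢
  rw [FQn_commonNeighbors_eq_pair hn huv hw]
  exact Set.ncard_pair (ne_oppositeVertex w huv)
end

section
/- Let K_{1,m} be a star subgraph of FQ_n with n ≥ 5 and 2 ≤ m ≤ n+1, and let C be a connected subgraph of FQ_n vertex-disjoint from K_{1,m} with |V(C)| = k ≥ 2. Then the number of vertices of K_{1,m} that are adjacent in FQ_n to some vertex of C is at most 2(k−1). -/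
lemma Finset.sum_le_two_mul_card_sub_one {ι : Type*} {s : Finset ι} {f : ι → ℕ}
    (hs : 2 ≤ s.card) (hf : ∀ x ∈ s, f x ≤ 2) (hzero : ∀ x ∈ s, 2 ≤ f x → ∃ y ∈ s, f y = 0) :
    ∑ x ∈ s, f x ≤ 2 * (s.card - 1) := by
  classical
  by_cases h : ∃ x ∈ s, 2 ≤ f x
  · obtain ⟨x, hx, hfx⟩ := h
    obtain ⟨y, hy, hfy⟩ := hzero x hx hfx
    rw [← Finset.sum_erase_add s f hy, hfy, add_zero, mul_comm, ← Finset.card_erase_of_mem hy]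
    exact Finset.sum_le_card_nsmul _ _ _ fun x hx => hf x (Finset.mem_of_mem_erase hx)
  · push Not at h
    calc ∑ x ∈ s, f x ≤ s.card • 1 :=
          Finset.sum_le_card_nsmul s f 1 fun x hx => Nat.le_of_lt_succ (h x hx)
      _ ≤ 2 * (s.card - 1) := by rw [smul_eq_mul]; omega

namespace SimpleGraph

variable {V : Type*} {G : SimpleGraph V}

lemma not_adj_of_short_even_walk (hodd : ∀ ⦃u⦄ (p : G.Walk u u), Odd p.length → 5 < p.length)
    {u v : V} (p : G.Walk u v) (hp : Even p.length) (hlen : p.length ≤ 4) : ¬G.Adj v u := by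
  intro h
  have := hodd (Walk.cons h p) (by simpa [Nat.odd_add_one] using hp)
  rw [Walk.length_cons] at this
  omega

lemma star_inter_neighborSet_subset_singleton
    (hodd : ∀ ⦃u⦄ (p : G.Walk u u), Odd p.length → 5 < p.length)
    {c : V} {L : Set V} (hL : ∀ w ∈ L, G.Adj c w) {x : V} (hxc : G.Adj x c) :
    ({c} ∪ L) ∩ G.neighborSet x ⊆ {c} := by
  rintro w ⟨hw | hw, hxw⟩
  · exact hw
  · exact absurd hxw.symm
      (not_adj_of_short_even_walk hodd (.cons hxc (.cons (hL w hw) .nil)) (by simp) (by simp))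

variable [Finite V]

lemma ncard_star_inter_neighborSet_le_two
    (hodd : ∀ ⦃u⦄ (p : G.Walk u u), Odd p.length → 5 < p.length)
    (hcommon : ∀ ⦃u v⦄, u ≠ v → (G.commonNeighbors u v).ncard ≤ 2)
    {c : V} {L : Set V} (hL : ∀ w ∈ L, G.Adj c w) {x : V} (hxc : x ≠ c) :
    (({c} ∪ L) ∩ G.neighborSet x).ncard ≤ 2 := by
  by_cases hx : G.Adj x c
  · calc _ ≤ ({c} : Set V).ncard :=
          Set.ncard_le_ncard (star_inter_neighborSet_subset_singleton hodd hL hx)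
      _ ≤ 2 := by simp
  · refine (Set.ncard_le_ncard ?_).trans (hcommon hxc)
    rintro w ⟨rfl | hw, hxw⟩
    · exact absurd hxw hx
    · exact ⟨hxw, hL w hw⟩

lemma exists_star_inter_neighborSet_eq_empty
    (hodd : ∀ ⦃u⦄ (p : G.Walk u u), Odd p.length → 5 < p.length)
    (hcommon : ∀ ⦃u v⦄, u ≠ v → (G.commonNeighbors u v).ncard ≤ 2)
    {c : V} {L : Set V} (hL : ∀ w ∈ L, G.Adj c w) {C : Set V}
    (hC : (G.induce C).Preconnected) (hCnt : C.Nontrivial) (hcC : c ∉ C) (hLC : Disjoint L C)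
    {x : V} (hx : x ∈ C) (h2 : 2 ≤ (({c} ∪ L) ∩ G.neighborSet x).ncard) :
    ∃ y ∈ C, ({c} ∪ L) ∩ G.neighborSet y = ∅ := by
  have hxc : ¬G.Adj x c := fun hxc => by
    have := Set.ncard_le_ncard (star_inter_neighborSet_subset_singleton hodd hL hxc)
    simp only [Set.ncard_singleton] at this
    omega
  have hleaf : ∀ w ∈ ({c} ∪ L) ∩ G.neighborSet x, w ∈ L ∧ G.Adj x w := by
    rintro w ⟨rfl | hw, hxw⟩
    · exact absurd hxw hxc
    · exact ⟨hw, hxw⟩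
  obtain ⟨a, b, ha, hb, hab⟩ := (Set.one_lt_ncard_iff).mp h2
  obtain ⟨haL, hxa⟩ := hleaf a ha
  obtain ⟨hbL, hxb⟩ := hleaf b hb
  have := hCnt.coe_sort
  obtain ⟨⟨y, hy⟩, hxy⟩ := hC.exists_adj_of_nontrivial ⟨x, hx⟩
  have hxy : G.Adj x y := hxy
  refine ⟨y, hy, Set.eq_empty_iff_forall_notMem.mpr ?_⟩
  rintro w ⟨rfl | hw, hyw⟩
  · have hyL : y ∉ L := Set.disjoint_right.mp hLC hy
    have : 2 < (G.commonNeighbors x w).ncard :=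
      (Set.two_lt_ncard_iff).mpr ⟨a, b, y, ⟨hxa, hL a haL⟩, ⟨hxb, hL b hbL⟩, ⟨hxy, hyw.symm⟩,
        hab, ne_of_mem_of_not_mem haL hyL, ne_of_mem_of_not_mem hbL hyL⟩
    exact absurd (hcommon (ne_of_mem_of_not_mem hx hcC)) (by omega)
  · exact not_adj_of_short_even_walk hodd
      (.cons hxy.symm (.cons hxa (.cons (hL a haL).symm (.cons (hL w hw) .nil))))
      (by simp [Nat.even_iff]) (by simp) hyw.symm

theorem ncard_star_inter_adj_le
    (hodd : ∀ ⦃u⦄ (p : G.Walk u u), Odd p.length → 5 < p.length)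
    (hcommon : ∀ ⦃u v⦄, u ≠ v → (G.commonNeighbors u v).ncard ≤ 2)
    {c : V} {L : Set V} (hL : ∀ w ∈ L, G.Adj c w) {C : Set V}
    (hC : (G.induce C).Preconnected) (hk : 2 ≤ C.ncard) (hcC : c ∉ C) (hLC : Disjoint L C) :
    (({c} ∪ L) ∩ {w | w ∉ C ∧ ∃ x ∈ C, G.Adj x w}).ncard ≤ 2 * (C.ncard - 1) := by
  have hCnt : C.Nontrivial := Set.one_lt_ncard_iff_nontrivial.mp hk
  obtain ⟨s, rfl⟩ := C.toFinite.exists_finset_coe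
  rw [Set.ncard_coe_finset] at hk ⊢
  have hsub : ({c} ∪ L) ∩ {w | w ∉ (s : Set V) ∧ ∃ x ∈ s, G.Adj x w} ⊆
      ⋃ x ∈ s, ({c} ∪ L) ∩ G.neighborSet x := by
    rintro w ⟨hw, -, x, hx, hxw⟩
    exact Set.mem_biUnion hx ⟨hw, hxw⟩
  calc _ ≤ (⋃ x ∈ s, ({c} ∪ L) ∩ G.neighborSet x).ncard := Set.ncard_le_ncard hsub
    _ ≤ ∑ x ∈ s, (({c} ∪ L) ∩ G.neighborSet x).ncard := s.set_ncard_biUnion_le _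
    _ ≤ 2 * (s.card - 1) := by
      refine Finset.sum_le_two_mul_card_sub_one hk
        (fun x hx => ncard_star_inter_neighborSet_le_two hodd hcommon hL
          (ne_of_mem_of_not_mem hx hcC)) fun x hx h2 => ?_
      obtain ⟨y, hy, hy0⟩ :=
        exists_star_inter_neighborSet_eq_empty hodd hcommon hL hC hCnt hcC hLC hx h2
      exact ⟨y, hy, by rw [hy0, Set.ncard_empty]⟩

end SimpleGraph

section Hamming

open Finset

variable {ι : Type*} [Fintype ι]

lemma hammingDist_add_hammingDist_bool (x y z : ι → Bool) :
    hammingDist x y + hammingDist y z =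
      hammingDist x z + 2 * #{i | x i ≠ y i ∧ y i ≠ z i} := by
  simp only [hammingDist, Finset.card_filter, Finset.mul_sum, ← Finset.sum_add_distrib]
  refine Finset.sum_congr rfl fun i _ => ?_
  cases x i <;> cases y i <;> cases z i <;> rfl

lemma hammingDist_compl_add_hammingDist (x y : ι → Bool) :
    hammingDist xᶜ y + hammingDist x y = Fintype.card ι := by
  simp only [hammingDist, Finset.card_filter, ← Finset.sum_add_distrib, Pi.compl_apply]
  rw [← Finset.card_univ, Finset.card_eq_sum_ones]
  refine Finset.sum_congr rfl fun i _ => ?_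
  cases x i <;> cases y i <;> rfl

lemma hammingDist_eq_card_iff {x y : ι → Bool} :
    hammingDist x y = Fintype.card ι ↔ y = xᶜ := by
  have := hammingDist_compl_add_hammingDist x y
  rw [eq_comm (a := y), ← hammingDist_eq_zero]
  omega

end Hamming

section FoldedHypercube

open Finset

variable {n : ℕ}

lemma diffCount_eq_hammingDist (x y : Fin n → Bool) : diffCount x y = hammingDist x y := rfl

lemma FQn.adj_iff (hn : 1 ≤ n) {x y : Fin n → Bool} :
    (FQn n).Adj x y ↔ hammingDist x y = 1 ∨ y = xᶜ := by
  have hcard : hammingDist x y = n ↔ y = xᶜ := by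
    simpa using hammingDist_eq_card_iff (x := x) (y := y)
  have hne : x ≠ y ↔ hammingDist x y ≠ 0 := hammingDist_ne_zero.symm
  change x ≠ y ∧ (hammingDist x y = 1 ∨ hammingDist x y = n) ↔ _
  rw [hne, ← hcard]
  omega

/-- A walk in `FQ_n` lifts to a walk in `Q_{n+1}` ending at one of the two preimages of its
endpoint, which lie at Hamming distance `d` and `n + 1 - d` from the start. -/
lemma FQn.walk_length_cases {u w : Fin n → Bool} (p : (FQn n).Walk u w) :
    (hammingDist u w ≤ p.length ∧ (p.length + hammingDist u w) % 2 = 0) ∨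
      (n + 1 ≤ p.length + hammingDist u w ∧ (p.length + hammingDist u w + n + 1) % 2 = 0) := by
  induction p with
  | nil => simp
  | @cons u v w huv p ih =>
    rw [SimpleGraph.Walk.length_cons]
    rcases huv.2 with h | h <;> rw [diffCount_eq_hammingDist] at h
    · have := hammingDist_add_hammingDist_bool u v w
      have := hammingDist_triangle v u w
      rw [hammingDist_comm v u] at this
      omega
    · have hv : v = uᶜ := hammingDist_eq_card_iff.mp (by simpa using h)
      have := hammingDist_compl_add_hammingDist u w
      rw [← hv, Fintype.card_fin] at this
      omega

lemma FQn.le_length_of_odd {u : Fin n → Bool} (p : (FQn n).Walk u u) (hp : Odd p.length) :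
    n + 1 ≤ p.length := by
  have := FQn.walk_length_cases p
  rw [hammingDist_self] at this
  rw [Nat.odd_iff] at hp
  omega

lemma eq_hFlip_of_forall_ne_iff {u w : Fin n → Bool} {i : Fin n}
    (h : ∀ j, u j ≠ w j ↔ j = i) : w = hFlip u i := by
  funext j
  unfold hFlip
  split_ifs with hj
  · have := (h j).mpr hj
    revert this
    cases u j <;> cases w j <;> simp
  · exact (not_not.mp (mt (h j).mp hj)).symm

lemma Qn.mem_commonNeighbors_iff {u v w : Fin n → Bool} :
    w ∈ (Qn n).commonNeighbors u v ↔ hammingDist u w = 1 ∧ hammingDist w v = 1 := by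
  rw [SimpleGraph.mem_commonNeighbors, hammingDist_comm w v]
  rfl

lemma Qn.hammingDist_eq_two_of_mem_commonNeighbors {u v w : Fin n → Bool} (huv : u ≠ v)
    (hw : w ∈ (Qn n).commonNeighbors u v) : hammingDist u v = 2 := by
  have := Qn.mem_commonNeighbors_iff.mp hw
  have := hammingDist_add_hammingDist_bool u w v
  have := hammingDist_ne_zero.mpr huv
  omega

lemma Qn.commonNeighbors_ncard_le_two {u v : Fin n → Bool} (huv : u ≠ v) :
    ((Qn n).commonNeighbors u v).ncard ≤ 2 := by
  rcases ((Qn n).commonNeighbors u v).eq_empty_or_nonempty with h | ⟨w₀, hw₀⟩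
  · simp [h]
  set D : Finset (Fin n) := {i | u i ≠ v i}
  have huv2 := Qn.hammingDist_eq_two_of_mem_commonNeighbors huv hw₀
  have hsub : (Qn n).commonNeighbors u v ⊆ (D.image (hFlip u) : Set _) := by
    intro w hw
    obtain ⟨huw, hwv⟩ := Qn.mem_commonNeighbors_iff.mp hw
    obtain ⟨i, hi⟩ := card_eq_one.mp huw
    have hi' : ∀ j, u j ≠ w j ↔ j = i := by simpa [Finset.ext_iff] using hi
    have hoverlap : #{j | u j ≠ w j ∧ w j ≠ v j} = 0 := by
      have := hammingDist_add_hammingDist_bool u w v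
      omega
    have hwi : w i = v i := by
      by_contra hne
      exact absurd hoverlap (card_pos.mpr ⟨i, by simp [(hi' i).mpr rfl, hne]⟩).ne'
    refine mem_image.mpr ⟨i, ?_, (eq_hFlip_of_forall_ne_iff hi').symm⟩
    simpa [D, ← hwi] using (hi' i).mpr rfl
  calc _ ≤ (D.image (hFlip u) : Set _).ncard := Set.ncard_le_ncard hsub
    _ ≤ #D := by
        rw [Set.ncard_coe_finset]
        exact card_image_le
    _ = 2 := huv2

lemma FQn.not_adj_compl_of_hammingDist_eq_two (hn : 4 ≤ n) {u v : Fin n → Bool}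
    (huv : hammingDist u v = 2) : ¬(FQn n).Adj v uᶜ := by
  have := hammingDist_compl_add_hammingDist u v
  rw [Fintype.card_fin, hammingDist_comm] at this
  rw [FQn.adj_iff (by omega), compl_inj_iff]
  rintro (h | rfl)
  · omega
  · simp at huv

lemma FQn.commonNeighbors_ncard_le_two (hn : 4 ≤ n) {u v : Fin n → Bool} (huv : u ≠ v) :
    ((FQn n).commonNeighbors u v).ncard ≤ 2 := by
  have hQn : ∀ w ∈ (FQn n).commonNeighbors u v, w ≠ uᶜ → w ≠ vᶜ →
      w ∈ (Qn n).commonNeighbors u v := by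
    intro w hw hwu hwv
    rw [SimpleGraph.mem_commonNeighbors, FQn.adj_iff (by omega), FQn.adj_iff (by omega)] at hw
    exact ⟨hw.1.resolve_right hwu, hw.2.resolve_right hwv⟩
  by_cases hS : (FQn n).commonNeighbors u v ⊆ {uᶜ, vᶜ}
  · calc _ ≤ ({uᶜ, vᶜ} : Set _).ncard := Set.ncard_le_ncard hS
      _ ≤ ({vᶜ} : Set (Fin n → Bool)).ncard + 1 := Set.ncard_insert_le _ _
      _ = 2 := by rw [Set.ncard_singleton]
  obtain ⟨w₀, hw₀, hw₀'⟩ := Set.not_subset.mp hS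
  simp only [Set.mem_insert_iff, Set.mem_singleton_iff, not_or] at hw₀'
  have huv2 := Qn.hammingDist_eq_two_of_mem_commonNeighbors huv (hQn w₀ hw₀ hw₀'.1 hw₀'.2)
  have hsub : (FQn n).commonNeighbors u v ⊆ (Qn n).commonNeighbors u v := by
    rintro w ⟨hu, hv⟩
    refine hQn w ⟨hu, hv⟩ ?_ ?_ <;> rintro rfl
    · exact FQn.not_adj_compl_of_hammingDist_eq_two hn huv2 hv
    · rw [hammingDist_comm] at huv2
      exact FQn.not_adj_compl_of_hammingDist_eq_two hn huv2 hu
  exact (Set.ncard_le_ncard hsub).trans (Qn.commonNeighbors_ncard_le_two huv)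

end FoldedHypercube

theorem stmt6_general (n m k : ℕ) (hn : 5 ≤ n)
    (c : Fin n → Bool) (l : Fin m → Fin n → Bool)
    (hadj : ∀ i, (FQn n).Adj c (l i))
    (C : Set (Fin n → Bool)) (hconn : ((FQn n).induce C).Connected)
    (hcard : C.ncard = k) (hk : 2 ≤ k)
    (hdisj : ∀ x ∈ C, x ≠ c ∧ ∀ i, x ≠ l i) :
    (({c} ∪ Set.range l) ∩ {w | w ∉ C ∧ ∃ x ∈ C, (FQn n).Adj x w}).ncard ≤ 2 * (k - 1) := by
  subst hcard
  refine SimpleGraph.ncard_star_inter_adj_le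
    (fun u p hp => by have := FQn.le_length_of_odd p hp; omega)
    (fun u v huv => FQn.commonNeighbors_ncard_le_two (by omega) huv)
    ?_ hconn.preconnected hk (fun hc => (hdisj c hc).1 rfl) ?_
  · rintro _ ⟨i, rfl⟩
    exact hadj i
  · refine Set.disjoint_right.mpr fun x hx => ?_
    rintro ⟨i, rfl⟩
    exact (hdisj _ hx).2 i rfl

/-- if `C` is a connected subgraph of `FQ_n` (`n ≥ 5`) on `k ≥ 2` vertices,
vertex-disjoint from a star `K_{1,m}` (`2 ≤ m ≤ n+1`), then at most `2(k-1)` vertices of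
the star are adjacent to some vertex of `C`. -/
theorem stmt6 (n m k : ℕ) (hn : 5 ≤ n) (hm1 : 2 ≤ m) (hm2 : m ≤ n + 1)
    (c : Fin n → Bool) (l : Fin m → Fin n → Bool)
    (hinj : Function.Injective l) (hadj : ∀ i, (FQn n).Adj c (l i))
    (C : Set (Fin n → Bool)) (hconn : ((FQn n).induce C).Connected)
    (hcard : C.ncard = k) (hk : 2 ≤ k)
    (hdisj : ∀ x ∈ C, x ≠ c ∧ ∀ i, x ≠ l i) :
    (({c} ∪ Set.range l) ∩ {w | w ∉ C ∧ ∃ x ∈ C, (FQn n).Adj x w}).ncard ≤ 2 * (k - 1) :=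
  stmt6_general n m k hn c l hadj C hconn hcard hk hdisj
end

section
/- In the augmented cube AQ_n with n ≥ 3, any two distinct vertices have at most 4 common neighbors. -/
/-!
A common neighbour `w` of `u` and `v` arises as `w = u + A = v + B`, where each of `A`, `B` is a
singleton `{i}` or a prefix `Iic i` with `i ≥ 1`; hence the set `D` where `u` and `v` differ is
`A ∆ B`. Sort the common neighbours by the kinds of `A` and `B`. Two singletons give `D = {i, j}`
and two prefixes give `D = Ioc a b`, so `D` leaves at most two choices of `w` in each case. A
singleton `{i}` with a prefix `Iic j` gives `D = Iic j \ {i}` if `i ≤ j` and `D = insert i (Iic j)`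
if `j < i`; then `i` is the least element outside `D`, resp. the greatest element of `D`, so each
of these four classes has at most one element. Finally `Ioc a b` with `a ≥ 1` misses `0` and `1`,
while every mixed `D` contains one of them, and `insert i (Iic j)` has more than two elements.
So the classes contribute at most `2 + 2`, `1 + 1 + 1 + 1` or `2 + 1 + 1` common neighbours.
-/

open scoped symmDiff

namespace Set

lemma singleton_symmDiff_singleton {α : Type*} {i j : α} (h : i ≠ j) :
    {i} ∆ {j} = ({i, j} : Set α) :=
  (disjoint_singleton.mpr h).symmDiff_eq_sup.trans singleton_union

section LinearOrder

variable {α : Type*} [LinearOrder α]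

lemma Iic_symmDiff_Iic_of_lt {a b : α} (h : a < b) : Iic a ∆ Iic b = Ioc a b := by
  rw [symmDiff_of_le (Iic_subset_Iic.mpr h.le)]
  ext k
  simp [and_comm]

lemma singleton_symmDiff_Iic_of_le {i j : α} (h : i ≤ j) : {i} ∆ Iic j = Iic j \ {i} :=
  symmDiff_of_le (singleton_subset_iff.mpr h)

lemma singleton_symmDiff_Iic_of_lt {i j : α} (h : j < i) :
    {i} ∆ Iic j = insert i (Iic j) :=
  (disjoint_singleton_left.mpr (notMem_Iic.mpr h)).symmDiff_eq_sup.trans singleton_union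

lemma isLeast_compl_Iic_sdiff_singleton {i j : α} (h : i ≤ j) : IsLeast (Iic j \ {i})ᶜ i := by
  refine ⟨by simp, fun k hk => ?_⟩
  simp only [mem_compl_iff, mem_sdiff, mem_Iic, mem_singleton_iff, not_and, not_not] at hk
  by_cases hkj : k ≤ j
  · exact (hk hkj).ge
  · exact h.trans (not_le.mp hkj).le

lemma isGreatest_insert_Iic {i j : α} (h : j < i) : IsGreatest (insert i (Iic j)) i :=
  ⟨mem_insert i _, fun _ hk => hk.elim le_of_eq fun hkj => (mem_Iic.mp hkj).trans h.le⟩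

end LinearOrder

end Set

namespace AugmentedCube

open Set

variable {n : ℕ}

def diffSet (u v : Fin n → Bool) : Set (Fin n) := {k | u k ≠ v k}

lemma diffSet_nonempty {u v : Fin n → Bool} (huv : u ≠ v) : (diffSet u v).Nonempty :=
  Function.ne_iff.mp huv

lemma diffSet_hFlip (u : Fin n → Bool) (i : Fin n) : diffSet u (hFlip u i) = {i} := by
  ext k; by_cases h : k = i <;> simp [diffSet, hFlip, h]

lemma diffSet_cFlip (u : Fin n → Bool) (i : Fin n) : diffSet u (cFlip u i) = Iic i := by
  ext k; by_cases h : k ≤ i <;> simp [diffSet, cFlip, h]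

lemma diffSet_eq_symmDiff (u v w : Fin n → Bool) :
    diffSet u v = diffSet u w ∆ diffSet v w := by
  ext k
  simp only [diffSet, mem_symmDiff, mem_ofPred_eq]
  cases u k <;> cases v k <;> cases w k <;> simp

def commonHH (u v : Fin n → Bool) : Set (Fin n → Bool) :=
  {w | (∃ i, w = hFlip u i) ∧ ∃ j, w = hFlip v j}

def commonCC (u v : Fin n → Bool) : Set (Fin n → Bool) :=
  {w | (∃ i : Fin n, 1 ≤ i.val ∧ w = cFlip u i) ∧ ∃ j : Fin n, 1 ≤ j.val ∧ w = cFlip v j}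

def commonHCLe (u v : Fin n → Bool) : Set (Fin n → Bool) :=
  {w | ∃ i j : Fin n, 1 ≤ j.val ∧ i ≤ j ∧ w = hFlip u i ∧ w = cFlip v j}

def commonHCGt (u v : Fin n → Bool) : Set (Fin n → Bool) :=
  {w | ∃ i j : Fin n, 1 ≤ j.val ∧ j < i ∧ w = hFlip u i ∧ w = cFlip v j}

lemma commonHH_comm (u v : Fin n → Bool) : commonHH u v = commonHH v u := by
  ext; exact and_comm

lemma commonCC_comm (u v : Fin n → Bool) : commonCC u v = commonCC v u := by
  ext; exact and_comm

lemma neighborSet_inter_subset (u v : Fin n → Bool) :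
    (AQn n).neighborSet u ∩ (AQn n).neighborSet v ⊆
      commonHH u v ∪ commonCC u v ∪ commonHCLe u v ∪ commonHCGt u v ∪
        commonHCLe v u ∪ commonHCGt v u := by
  rintro w ⟨⟨-, hu⟩, ⟨-, hv⟩⟩
  simp only [mem_union]
  rcases hu with ⟨i, hi⟩ | ⟨i, hi1, hi⟩ <;> rcases hv with ⟨j, hj⟩ | ⟨j, hj1, hj⟩
  · exact Or.inl (Or.inl (Or.inl (Or.inl (Or.inl ⟨⟨i, hi⟩, ⟨j, hj⟩⟩))))
  · rcases le_or_gt i j with h | h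
    · exact Or.inl (Or.inl (Or.inl (Or.inr ⟨i, j, hj1, h, hi, hj⟩)))
    · exact Or.inl (Or.inl (Or.inr ⟨i, j, hj1, h, hi, hj⟩))
  · rcases le_or_gt j i with h | h
    · exact Or.inl (Or.inr ⟨j, i, hi1, h, hj, hi⟩)
    · exact Or.inr ⟨j, i, hi1, h, hj, hi⟩
  · exact Or.inl (Or.inl (Or.inl (Or.inl (Or.inr ⟨⟨i, hi1, hi⟩, ⟨j, hj1, hj⟩⟩))))

lemma ncard_neighborSet_inter_le (u v : Fin n → Bool) :
    ((AQn n).neighborSet u ∩ (AQn n).neighborSet v).ncard ≤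
      (commonHH u v).ncard + (commonCC u v).ncard + (commonHCLe u v).ncard +
        (commonHCGt u v).ncard + (commonHCLe v u).ncard + (commonHCGt v u).ncard := by
  grw [ncard_le_ncard (neighborSet_inter_subset u v), ncard_union_le, ncard_union_le,
    ncard_union_le, ncard_union_le, ncard_union_le]

variable {u v w : Fin n → Bool}

lemma diffSet_of_mem_commonHH (huv : u ≠ v) (hw : w ∈ commonHH u v) :
    ∃ i j, i ≠ j ∧ w = hFlip u i ∧ diffSet u v = {i, j} := by
  obtain ⟨⟨i, rfl⟩, j, hj⟩ := hw
  have hD : diffSet u v = {i} ∆ {j} := by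
    rw [diffSet_eq_symmDiff u v (hFlip u i), diffSet_hFlip, hj, diffSet_hFlip]
  have hij : i ≠ j := by
    rintro rfl
    simpa [hD] using diffSet_nonempty huv
  exact ⟨i, j, hij, rfl, hD.trans (singleton_symmDiff_singleton hij)⟩

lemma diffSet_of_mem_commonCC (huv : u ≠ v) (hw : w ∈ commonCC u v) :
    ∃ a b : Fin n, 1 ≤ a.val ∧ a < b ∧ (w = cFlip u a ∨ w = cFlip u b) ∧
      diffSet u v = Ioc a b := by
  obtain ⟨⟨i, hi1, rfl⟩, j, hj1, hj⟩ := hw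
  have hD : diffSet u v = Iic i ∆ Iic j := by
    rw [diffSet_eq_symmDiff u v (cFlip u i), diffSet_cFlip, hj, diffSet_cFlip]
  rcases lt_trichotomy i j with h | rfl | h
  · exact ⟨i, j, hi1, h, Or.inl rfl, hD.trans (Iic_symmDiff_Iic_of_lt h)⟩
  · simpa [hD] using diffSet_nonempty huv
  · refine ⟨j, i, hj1, h, Or.inr rfl, ?_⟩
    rw [hD, symmDiff_comm, Iic_symmDiff_Iic_of_lt h]

lemma diffSet_of_mem_commonHCLe (hw : w ∈ commonHCLe u v) :
    ∃ i j : Fin n, 1 ≤ j.val ∧ i ≤ j ∧ w = hFlip u i ∧ diffSet u v = Iic j \ {i} := by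
  obtain ⟨i, j, hj1, hij, rfl, hj⟩ := hw
  refine ⟨i, j, hj1, hij, rfl, ?_⟩
  rw [diffSet_eq_symmDiff u v (hFlip u i), diffSet_hFlip, hj, diffSet_cFlip,
    singleton_symmDiff_Iic_of_le hij]

lemma diffSet_of_mem_commonHCGt (hw : w ∈ commonHCGt u v) :
    ∃ i j : Fin n, 1 ≤ j.val ∧ j < i ∧ w = hFlip u i ∧ diffSet u v = insert i (Iic j) := by
  obtain ⟨i, j, hj1, hji, rfl, hj⟩ := hw
  refine ⟨i, j, hj1, hji, rfl, ?_⟩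
  rw [diffSet_eq_symmDiff u v (hFlip u i), diffSet_hFlip, hj, diffSet_cFlip,
    singleton_symmDiff_Iic_of_lt hji]

lemma commonHH_subset_image (huv : u ≠ v) : commonHH u v ⊆ hFlip u '' diffSet u v := by
  intro w hw
  obtain ⟨i, j, -, rfl, hD⟩ := diffSet_of_mem_commonHH huv hw
  exact ⟨i, hD ▸ mem_insert i {j}, rfl⟩

lemma ncard_commonHH_le_two (huv : u ≠ v) : (commonHH u v).ncard ≤ 2 := by
  rcases (commonHH u v).eq_empty_or_nonempty with h | ⟨w, hw⟩
  · simp [h]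
  obtain ⟨i, j, hij, -, hD⟩ := diffSet_of_mem_commonHH huv hw
  calc (commonHH u v).ncard ≤ (hFlip u '' diffSet u v).ncard :=
        ncard_le_ncard (commonHH_subset_image huv)
    _ ≤ (diffSet u v).ncard := ncard_image_le
    _ = 2 := by rw [hD, ncard_pair hij]

lemma ncard_commonCC_le_two (huv : u ≠ v) : (commonCC u v).ncard ≤ 2 := by
  rcases (commonCC u v).eq_empty_or_nonempty with h | ⟨w₀, hw₀⟩
  · simp [h]
  obtain ⟨a, b, -, hab, -, hD⟩ := diffSet_of_mem_commonCC huv hw₀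
  have hsub : commonCC u v ⊆ {cFlip u a, cFlip u b} := by
    intro w hw
    obtain ⟨a', b', -, -, hw', hD'⟩ := diffSet_of_mem_commonCC huv hw
    obtain ⟨rfl, rfl⟩ := (Ioc_eq_Ioc_iff (Or.inl hab)).mp (hD.symm.trans hD')
    exact hw'
  exact (ncard_le_ncard hsub).trans ((ncard_insert_le _ _).trans (by rw [ncard_singleton]))

lemma commonHCLe_subsingleton (u v : Fin n → Bool) : (commonHCLe u v).Subsingleton := by
  intro w hw w' hw'
  obtain ⟨i, j, -, hij, rfl, hD⟩ := diffSet_of_mem_commonHCLe hw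
  obtain ⟨i', j', -, hij', rfl, hD'⟩ := diffSet_of_mem_commonHCLe hw'
  have hi : IsLeast (diffSet u v)ᶜ i := hD ▸ isLeast_compl_Iic_sdiff_singleton hij
  rw [hi.unique (hD' ▸ isLeast_compl_Iic_sdiff_singleton hij')]

lemma commonHCGt_subsingleton (u v : Fin n → Bool) : (commonHCGt u v).Subsingleton := by
  intro w hw w' hw'
  obtain ⟨i, j, -, hji, rfl, hD⟩ := diffSet_of_mem_commonHCGt hw
  obtain ⟨i', j', -, hji', rfl, hD'⟩ := diffSet_of_mem_commonHCGt hw'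
  have hi : IsGreatest (diffSet u v) i := hD ▸ isGreatest_insert_Iic hji
  rw [hi.unique (hD' ▸ isGreatest_insert_Iic hji')]

lemma two_le_val_of_mem_diffSet_of_mem_commonCC (huv : u ≠ v) (hw : w ∈ commonCC u v)
    {k : Fin n} (hk : k ∈ diffSet u v) : 2 ≤ k.val := by
  obtain ⟨a, b, ha1, -, -, hD⟩ := diffSet_of_mem_commonCC huv hw
  have hak : a.val < k.val := (hD ▸ hk).1
  omega

lemma exists_mem_diffSet_val_le_one_of_mem_commonHCLe (hw : w ∈ commonHCLe u v) :
    ∃ k ∈ diffSet u v, k.val ≤ 1 := by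
  obtain ⟨i, j, hj1, -, -, hD⟩ := diffSet_of_mem_commonHCLe hw
  rw [hD]
  by_cases hi : i.val = 0
  · exact ⟨⟨1, by omega⟩, ⟨hj1, fun h => by simp [Fin.ext_iff] at h; omega⟩, le_rfl⟩
  · exact ⟨⟨0, j.pos⟩, ⟨Nat.zero_le _, fun h => by simp [Fin.ext_iff] at h; omega⟩,
      zero_le_one⟩

lemma exists_mem_diffSet_val_le_one_of_mem_commonHCGt (hw : w ∈ commonHCGt u v) :
    ∃ k ∈ diffSet u v, k.val ≤ 1 := by
  obtain ⟨i, j, -, -, -, hD⟩ := diffSet_of_mem_commonHCGt hw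
  exact ⟨⟨0, j.pos⟩, hD ▸ mem_insert_of_mem i (Nat.zero_le _), zero_le_one⟩

lemma two_lt_ncard_diffSet_of_mem_commonHCGt (hw : w ∈ commonHCGt u v) :
    2 < (diffSet u v).ncard := by
  obtain ⟨i, j, hj1, hji, -, hD⟩ := diffSet_of_mem_commonHCGt hw
  have hji' : j.val < i.val := hji
  rw [hD, two_lt_ncard_iff]
  refine ⟨⟨0, by omega⟩, ⟨1, by omega⟩, i, mem_insert_of_mem i (Nat.zero_le _),
    mem_insert_of_mem i hj1, mem_insert i _, ?_, ?_, ?_⟩ <;> simp [Fin.ext_iff] <;> omega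

lemma commonHCLe_eq_empty_of_nonempty_commonCC (huv : u ≠ v) (h : (commonCC u v).Nonempty) :
    commonHCLe u v = ∅ := by
  refine eq_empty_of_forall_notMem fun w hw => ?_
  obtain ⟨k, hk, hk1⟩ := exists_mem_diffSet_val_le_one_of_mem_commonHCLe hw
  have := two_le_val_of_mem_diffSet_of_mem_commonCC huv h.some_mem hk
  omega

lemma commonHCGt_eq_empty_of_nonempty_commonCC (huv : u ≠ v) (h : (commonCC u v).Nonempty) :
    commonHCGt u v = ∅ := by
  refine eq_empty_of_forall_notMem fun w hw => ?_
  obtain ⟨k, hk, hk1⟩ := exists_mem_diffSet_val_le_one_of_mem_commonHCGt hw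
  have := two_le_val_of_mem_diffSet_of_mem_commonCC huv h.some_mem hk
  omega

lemma commonHH_eq_empty_of_nonempty_commonHCGt (huv : u ≠ v) (h : (commonHCGt u v).Nonempty) :
    commonHH u v = ∅ := by
  refine eq_empty_of_forall_notMem fun w hw => ?_
  obtain ⟨i, j, hij, -, hD⟩ := diffSet_of_mem_commonHH huv hw
  have := two_lt_ncard_diffSet_of_mem_commonHCGt h.some_mem
  rw [hD, ncard_pair hij] at this
  exact lt_irrefl _ this

end AugmentedCube

open Set AugmentedCube

theorem stmt10_general (n : ℕ) (u v : Fin n → Bool) (huv : u ≠ v) :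
    ((AQn n).neighborSet u ∩ (AQn n).neighborSet v).ncard ≤ 4 := by
  have hvu := huv.symm
  have hcount := ncard_neighborSet_inter_le u v
  have := ncard_commonHH_le_two huv
  have := ncard_commonCC_le_two huv
  have := ncard_le_one_iff_subsingleton.mpr (commonHCLe_subsingleton u v)
  have := ncard_le_one_iff_subsingleton.mpr (commonHCLe_subsingleton v u)
  have := ncard_le_one_iff_subsingleton.mpr (commonHCGt_subsingleton u v)
  have := ncard_le_one_iff_subsingleton.mpr (commonHCGt_subsingleton v u)
  by_cases hCC : (commonCC u v).Nonempty
  · have hCC' : (commonCC v u).Nonempty := commonCC_comm u v ▸ hCC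
    have := (ncard_eq_zero).mpr (commonHCLe_eq_empty_of_nonempty_commonCC huv hCC)
    have := (ncard_eq_zero).mpr (commonHCGt_eq_empty_of_nonempty_commonCC huv hCC)
    have := (ncard_eq_zero).mpr (commonHCLe_eq_empty_of_nonempty_commonCC hvu hCC')
    have := (ncard_eq_zero).mpr (commonHCGt_eq_empty_of_nonempty_commonCC hvu hCC')
    omega
  have := (ncard_eq_zero).mpr (not_nonempty_iff_eq_empty.mp hCC)
  by_cases hGt : (commonHCGt u v).Nonempty ∨ (commonHCGt v u).Nonempty
  · have hHH : commonHH u v = ∅ := hGt.elim (commonHH_eq_empty_of_nonempty_commonHCGt huv)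
      fun h => commonHH_comm u v ▸ commonHH_eq_empty_of_nonempty_commonHCGt hvu h
    have := (ncard_eq_zero).mpr hHH
    omega
  · simp only [not_or, not_nonempty_iff_eq_empty] at hGt
    have := (ncard_eq_zero).mpr hGt.1
    have := (ncard_eq_zero).mpr hGt.2
    omega

/-- in `AQ_n` (`n ≥ 3`) any two distinct vertices have at most 4 common
neighbours. -/
theorem stmt10 (n : ℕ) (hn : 3 ≤ n) (u v : Fin n → Bool) (huv : u ≠ v) :
    ((AQn n).neighborSet u ∩ (AQn n).neighborSet v).ncard ≤ 4 :=
  stmt10_general n u v huv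
end

section
/- In AQ_n (n ≥ 2), for a hypercube edge u u^i with 2 ≤ i ≤ n, the common neighbors of u and u^i are exactly {ū^i, ū^{i−1}}, and for i = 1 they are exactly {ū^2, u^2}. -/
/-!
Flipping the bits in a set `s` is a simply transitive action of `(Finset (Fin n), ∆)` on the
vertices, and `AQ_n` is the corresponding Cayley graph, generated by the singletons `{j}` and
the initial segments `Iic j`. Hence the common neighbours of `u` and `u^i` are the images of
the generators `s` for which `{i} ∆ s` is again a generator; comparing the two shapes pointwise
leaves only `Iic i, Iic (i - 1)` when `i ≥ 1` and `Iic 1, {1}` when `i = 0`.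
-/

open Finset
open scoped symmDiff

section Flip

variable {ι : Type*} [DecidableEq ι]

def flipOn (u : ι → Bool) (s : Finset ι) : ι → Bool := fun j => xor (u j) (decide (j ∈ s))

lemma flipOn_empty (u : ι → Bool) : flipOn u ∅ = u := by
  funext j; simp [flipOn]

lemma flipOn_flipOn (u : ι → Bool) (s t : Finset ι) :
    flipOn (flipOn u s) t = flipOn u (s ∆ t) := by
  funext j; by_cases hs : j ∈ s <;> by_cases ht : j ∈ t <;> simp [flipOn, mem_symmDiff, hs, ht]

lemma flipOn_injective (u : ι → Bool) : Function.Injective (flipOn u) := by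
  intro s t h
  ext j
  simpa [flipOn] using congrFun h j

lemma flipOn_eq_self_iff (u : ι → Bool) (s : Finset ι) : flipOn u s = u ↔ s = ∅ :=
  (flipOn_injective u).eq_iff' (flipOn_empty u)

lemma flipOn_surjective [Fintype ι] (u : ι → Bool) : Function.Surjective (flipOn u) := by
  intro w
  refine ⟨univ.filter fun j => u j ≠ w j, funext fun j => ?_⟩
  cases hu : u j <;> cases hw : w j <;> simp [flipOn, hu, hw]

lemma singleton_symmDiff_singleton_ne_singleton (i j k : ι) :
    ({i} : Finset ι) ∆ {j} ≠ {k} := by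
  intro h
  have hk := Finset.ext_iff.1 h k
  have hi := Finset.ext_iff.1 h i
  have hj := Finset.ext_iff.1 h j
  simp only [mem_symmDiff, mem_singleton] at hk hi hj
  grind

end Flip

section Augmented

variable {n : ℕ}

lemma flipOn_singleton (u : Fin n → Bool) (i : Fin n) : flipOn u {i} = hFlip u i := by
  funext j; by_cases h : j = i <;> simp [flipOn, hFlip, h]

lemma flipOn_Iic (u : Fin n → Bool) (i : Fin n) : flipOn u (Iic i) = cFlip u i := by
  funext j; by_cases h : j ≤ i <;> simp [flipOn, cFlip, h]

lemma Iic_eq_singleton_of_val_eq_zero {i : Fin n} (hi : i.val = 0) :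
    Iic i = ({i} : Finset (Fin n)) := by
  ext m; simp only [mem_Iic, mem_singleton, Fin.le_def, Fin.ext_iff]; omega

-- `Iic 0 = {0}` is a singleton, so unlike in `AQn` no bound `1 ≤ j` is needed.
def augCubeGens (n : ℕ) : Set (Finset (Fin n)) :=
  {s : Finset (Fin n) | (∃ j, s = {j}) ∨ ∃ j, s = Iic j}

lemma AQn_adj_flipOn_iff (u : Fin n → Bool) (s : Finset (Fin n)) :
    (AQn n).Adj u (flipOn u s) ↔ s ∈ augCubeGens n := by
  simp only [AQn, augCubeGens, ne_comm (a := u), ne_eq, flipOn_eq_self_iff, ← flipOn_singleton,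
    ← flipOn_Iic, (flipOn_injective u).eq_iff, Set.mem_ofPred_eq]
  constructor
  · rintro ⟨-, ⟨j, rfl⟩ | ⟨j, -, rfl⟩⟩
    exacts [Or.inl ⟨j, rfl⟩, Or.inr ⟨j, rfl⟩]
  · rintro (⟨j, rfl⟩ | ⟨j, rfl⟩)
    · exact ⟨(singleton_nonempty j).ne_empty, Or.inl ⟨j, rfl⟩⟩
    · refine ⟨nonempty_Iic.ne_empty, ?_⟩
      by_cases hj : j.val = 0
      · exact Or.inl ⟨j, Iic_eq_singleton_of_val_eq_zero hj⟩
      · exact Or.inr ⟨j, by omega, rfl⟩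

lemma AQn_adj_flipOn_flipOn_iff (u : Fin n → Bool) (s t : Finset (Fin n)) :
    (AQn n).Adj (flipOn u s) (flipOn u t) ↔ s ∆ t ∈ augCubeGens n := by
  rw [← AQn_adj_flipOn_iff (flipOn u s), flipOn_flipOn, symmDiff_symmDiff_cancel_left]

lemma AQn_neighborSet_inter_neighborSet_flipOn (u : Fin n → Bool) (t : Finset (Fin n)) :
    (AQn n).neighborSet u ∩ (AQn n).neighborSet (flipOn u t) =
      flipOn u '' {s | s ∈ augCubeGens n ∧ t ∆ s ∈ augCubeGens n} := by
  ext w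
  obtain ⟨s, rfl⟩ := flipOn_surjective u w
  simp only [Set.mem_inter_iff, SimpleGraph.mem_neighborSet, (flipOn_injective u).mem_set_image]
  rw [AQn_adj_flipOn_iff, AQn_adj_flipOn_flipOn_iff]
  rfl

lemma singleton_symmDiff_singleton_eq_Iic {i j k : Fin n}
    (h : ({i} : Finset (Fin n)) ∆ {j} = Iic k) :
    k.val = 1 ∧ i.val + j.val = 1 := by
  have mem := Finset.ext_iff.1 h
  simp only [mem_symmDiff, mem_singleton, mem_Iic, Fin.le_def, Fin.ext_iff, Fin.forall_iff] at mem
  have := mem i i.isLt; have := mem j j.isLt; have := mem k k.isLt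
  have := mem 0 (by omega); have := mem 1 (by omega)
  omega

lemma singleton_symmDiff_Iic_eq_Iic {i j k : Fin n}
    (h : ({i} : Finset (Fin n)) ∆ Iic j = Iic k) :
    (j = i ∧ k.val + 1 = i.val) ∨ (k = i ∧ j.val + 1 = i.val) := by
  have mem := Finset.ext_iff.1 h
  simp only [mem_symmDiff, mem_singleton, mem_Iic, Fin.le_def, Fin.ext_iff,
    Fin.forall_iff] at mem ⊢
  have := mem i i.isLt; have := mem j j.isLt; have := mem k k.isLt
  have := mem (min j.val k.val + 1) (by omega)
  omega

lemma singleton_symmDiff_Iic_self {i j : Fin n} (hji : j.val + 1 = i.val) :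
    ({i} : Finset (Fin n)) ∆ Iic i = Iic j := by
  ext m
  simp only [mem_symmDiff, mem_singleton, mem_Iic, Fin.le_def, Fin.ext_iff]
  omega

lemma augCubeGens_common_of_val_add_one_eq {i j : Fin n} (hji : j.val + 1 = i.val) :
    {s | s ∈ augCubeGens n ∧ {i} ∆ s ∈ augCubeGens n} = {Iic i, Iic j} := by
  ext s
  simp only [augCubeGens, Set.mem_ofPred_eq, Set.mem_insert_iff, Set.mem_singleton_iff]
  constructor
  · rintro ⟨⟨l, rfl⟩ | ⟨l, rfl⟩, ⟨k, hk⟩ | ⟨k, hk⟩⟩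
    · exact absurd hk (singleton_symmDiff_singleton_ne_singleton i l k)
    · obtain ⟨-, hil⟩ := singleton_symmDiff_singleton_eq_Iic hk
      rw [Iic_eq_singleton_of_val_eq_zero (i := j) (by omega), Fin.ext (by omega : l.val = j.val)]
      exact Or.inr rfl
    · obtain ⟨hl, hik⟩ := singleton_symmDiff_singleton_eq_Iic (i := i) (j := k) (k := l)
        (by rw [← hk, symmDiff_symmDiff_cancel_left])
      exact Or.inl (congrArg Iic (Fin.ext (by omega)))
    · rcases singleton_symmDiff_Iic_eq_Iic hk with ⟨rfl, -⟩ | ⟨-, hli⟩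
      exacts [Or.inl rfl, Or.inr (congrArg Iic (Fin.ext (by omega)))]
  · rintro (rfl | rfl)
    · exact ⟨Or.inr ⟨i, rfl⟩, Or.inr ⟨j, singleton_symmDiff_Iic_self hji⟩⟩
    · refine ⟨Or.inr ⟨j, rfl⟩, Or.inr ⟨i, ?_⟩⟩
      rw [← singleton_symmDiff_Iic_self hji, symmDiff_symmDiff_cancel_left]

lemma augCubeGens_common_of_val_eq_zero {i j : Fin n} (hi : i.val = 0) (hj : j.val = 1) :
    {s | s ∈ augCubeGens n ∧ {i} ∆ s ∈ augCubeGens n} = {Iic j, {j}} := by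
  have hpair : ({i} : Finset (Fin n)) ∆ {j} = Iic j := by
    ext m
    simp only [mem_symmDiff, mem_singleton, mem_Iic, Fin.le_def, Fin.ext_iff]
    omega
  ext s
  simp only [augCubeGens, Set.mem_ofPred_eq, Set.mem_insert_iff, Set.mem_singleton_iff]
  constructor
  · rintro ⟨⟨l, rfl⟩ | ⟨l, rfl⟩, ⟨k, hk⟩ | ⟨k, hk⟩⟩
    · exact absurd hk (singleton_symmDiff_singleton_ne_singleton i l k)
    · obtain ⟨-, hil⟩ := singleton_symmDiff_singleton_eq_Iic hk
      exact Or.inr (congrArg _ (Fin.ext (by omega)))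
    · obtain ⟨hl, -⟩ := singleton_symmDiff_singleton_eq_Iic (i := i) (j := k) (k := l)
        (by rw [← hk, symmDiff_symmDiff_cancel_left])
      exact Or.inl (congrArg Iic (Fin.ext (by omega)))
    · rcases singleton_symmDiff_Iic_eq_Iic hk with ⟨-, h⟩ | ⟨-, h⟩ <;> omega
  · rintro (rfl | rfl)
    · refine ⟨Or.inr ⟨j, rfl⟩, Or.inl ⟨j, ?_⟩⟩
      rw [← hpair, symmDiff_symmDiff_cancel_left]
    · exact ⟨Or.inl ⟨j, rfl⟩, Or.inr ⟨j, hpair⟩⟩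

end Augmented

/-- common neighbours across a hypercube edge `u u^i` of `AQ_n` (`n ≥ 2`).
Here `i : Fin n` encodes the (1-based) bit `i+1`; for bit `≥ 2` the common neighbours
are `{ū^i, ū^{i-1}}` and for bit `1` they are `{ū^2, u^2}`. -/
theorem stmt11 (n : ℕ) (hn : 2 ≤ n) (u : Fin n → Bool) (i : Fin n) :
    (AQn n).neighborSet u ∩ (AQn n).neighborSet (hFlip u i) =
      if 1 ≤ i.val then
        {cFlip u i, cFlip u ⟨i.val - 1, Nat.lt_of_le_of_lt (Nat.sub_le _ _) i.isLt⟩}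
      else
        {cFlip u ⟨1, hn⟩, hFlip u ⟨1, hn⟩} := by
  rw [← flipOn_singleton, AQn_neighborSet_inter_neighborSet_flipOn]
  split_ifs with hi
  · rw [augCubeGens_common_of_val_add_one_eq (j := ⟨i.val - 1, _⟩) (by simp only; omega),
      Set.image_pair, flipOn_Iic, flipOn_Iic]
  · rw [augCubeGens_common_of_val_eq_zero (j := ⟨1, hn⟩) (by omega) rfl, Set.image_pair,
      flipOn_Iic, flipOn_singleton]
end

section
/- In AQ_n (n ≥ 2), if two vertices u, w of the same half AQ_{n−1}^i (same leading bit) have a common neighbor in the other half AQ_{n−1}^{1−i}, then w = ū^{n−1} (u with bits 1,…,n−1 flipped), and u and w have exactly two common neighbors in the other half, namely u^n and ū^n. -/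
/-! The only neighbours of `v` across the last coordinate are `v^n` and `v̄^n`. So a common
neighbour of `u` and `w` in the other half is reached from `u` by one of these two flips and then
back to `w` by the other; both composites equal `ū^{n-1}`, and for that `w` the two cross pairs
coincide. -/

section Flips

variable {n : ℕ} (u : Fin n → Bool)

lemma hFlip_apply_self (i : Fin n) : hFlip u i i = !u i := by
  simp [hFlip]

lemma cFlip_apply_self (i : Fin n) : cFlip u i i = !u i := by
  simp [cFlip]

lemma hFlip_ne_self (i : Fin n) : hFlip u i ≠ u := fun h => by
  simpa [hFlip_apply_self] using congrFun h i

lemma cFlip_ne_self (i : Fin n) : cFlip u i ≠ u := fun h => by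
  simpa [cFlip_apply_self] using congrFun h i

variable {a b : Fin n} (hab : b.val + 1 = a.val)
include hab

lemma cFlip_hFlip_of_val_succ : cFlip (hFlip u a) a = cFlip u b := by
  funext j
  simp only [cFlip, hFlip, Fin.le_def, Fin.ext_iff]
  split_ifs <;> (try simp) <;> omega

lemma hFlip_cFlip_of_val_succ : hFlip (cFlip u a) a = cFlip u b := by
  funext j
  simp only [cFlip, hFlip, Fin.le_def, Fin.ext_iff]
  split_ifs <;> (try simp) <;> omega

end Flips

section AugmentedCube

variable {n : ℕ}

lemma AQn_adj_hFlip (u : Fin n → Bool) (i : Fin n) : (AQn n).Adj u (hFlip u i) :=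
  ⟨(hFlip_ne_self u i).symm, Or.inl ⟨i, rfl⟩⟩

lemma AQn_adj_cFlip (u : Fin n → Bool) {i : Fin n} (hi : 1 ≤ i.val) :
    (AQn n).Adj u (cFlip u i) :=
  ⟨(cFlip_ne_self u i).symm, Or.inr ⟨i, hi, rfl⟩⟩

lemma AQn_neighborSet_across_last {a : Fin n} (ha : ∀ j, j ≤ a) (ha1 : 1 ≤ a.val)
    (v : Fin n → Bool) :
    {z | z a ≠ v a} ∩ (AQn n).neighborSet v = {hFlip v a, cFlip v a} := by
  ext z
  simp only [Set.mem_inter_iff, Set.mem_ofPred_eq, SimpleGraph.mem_neighborSet,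
    Set.mem_insert_iff, Set.mem_singleton_iff]
  constructor
  · rintro ⟨hz, -, ⟨i, rfl⟩ | ⟨i, -, rfl⟩⟩
    · have hia : i = a := by
        by_contra h
        exact hz (if_neg (Ne.symm h))
      exact Or.inl (hia ▸ rfl)
    · have hai : a ≤ i := by
        by_contra h
        exact hz (if_neg h)
      exact Or.inr (le_antisymm (ha i) hai ▸ rfl)
  · rintro (rfl | rfl)
    · exact ⟨by simp [hFlip_apply_self], AQn_adj_hFlip v a⟩
    · exact ⟨by simp [cFlip_apply_self], AQn_adj_cFlip v ha1⟩

theorem AQn_common_neighbors_across_last {a b : Fin n} (ha : ∀ j, j ≤ a)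
    (hab : b.val + 1 = a.val)
    {u w : Fin n → Bool} (hne : u ≠ w) (hsame : u a = w a)
    (hcn : ∃ z, z a ≠ u a ∧ (AQn n).Adj u z ∧ (AQn n).Adj w z) :
    w = cFlip u b ∧
    {z | z a ≠ u a} ∩ (AQn n).neighborSet u ∩ (AQn n).neighborSet w =
      {hFlip u a, cFlip u a} := by
  have ha1 : 1 ≤ a.val := by omega
  have across (v : Fin n → Bool) := AQn_neighborSet_across_last ha ha1 v
  have hS : {z | z a ≠ u a} ∩ (AQn n).neighborSet u ∩ (AQn n).neighborSet w =
      ({z | z a ≠ u a} ∩ (AQn n).neighborSet u) ∩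
        ({z | z a ≠ w a} ∩ (AQn n).neighborSet w) := by
    rw [← hsame]; ext; simp only [Set.mem_inter_iff]; tauto
  obtain ⟨z, hz, huz, hwz⟩ := hcn
  have hzu : z ∈ ({hFlip u a, cFlip u a} : Set _) := across u ▸ ⟨hz, huz⟩
  have hzw : z ∈ ({hFlip w a, cFlip w a} : Set _) := across w ▸ ⟨hsame ▸ hz, hwz⟩
  have hw : w = cFlip u b := by
    rcases hzu with rfl | rfl <;> rcases hzw with h | h
    · exact absurd (by rw [← hFlip_hFlip u a, h, hFlip_hFlip]) hne
    · rw [← cFlip_cFlip w a, ← h, cFlip_hFlip_of_val_succ u hab]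
    · rw [← hFlip_hFlip w a, ← h, hFlip_cFlip_of_val_succ u hab]
    · exact absurd (by rw [← cFlip_cFlip u a, h, cFlip_cFlip]) hne
  have hwh : hFlip w a = cFlip u a := by
    rw [hw, ← hFlip_cFlip_of_val_succ u hab, hFlip_hFlip]
  have hwc : cFlip w a = hFlip u a := by
    rw [hw, ← cFlip_hFlip_of_val_succ u hab, cFlip_cFlip]
  refine ⟨hw, ?_⟩
  rw [hS, across, across, hwh, hwc, Set.pair_comm, Set.inter_self]

end AugmentedCube

/-- if two vertices of the same half of `AQ_n` (same leading bit) have a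
common neighbour in the other half, then `w = ū^{n-1}` and their common neighbours in the
other half are exactly `u^n` and `ū^n`. -/
theorem stmt13 (n : ℕ) (hn : 2 ≤ n) (u w : Fin n → Bool) (hne : u ≠ w)
    (hsame : u ⟨n - 1, by omega⟩ = w ⟨n - 1, by omega⟩)
    (hcn : ∃ z, z ⟨n - 1, by omega⟩ ≠ u ⟨n - 1, by omega⟩ ∧
      (AQn n).Adj u z ∧ (AQn n).Adj w z) :
    w = cFlip u ⟨n - 2, by omega⟩ ∧
    {z | z ⟨n - 1, by omega⟩ ≠ u ⟨n - 1, by omega⟩} ∩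
        (AQn n).neighborSet u ∩ (AQn n).neighborSet w =
      {hFlip u ⟨n - 1, by omega⟩, cFlip u ⟨n - 1, by omega⟩} :=
  AQn_common_neighbors_across_last (fun j => Fin.le_def.2 (Nat.le_sub_one_of_lt j.isLt))
    (by simp; omega) hne hsame hcn
end

section
/- In AQ_n (n ≥ 3), for two complement edges u ū^i and u ū^j with 2 ≤ i < j ≤ n, the vertices ū^i and ū^j have exactly 4 common neighbors if and only if j = i + 2; if j = i+1 or j > i+2 they have exactly 2 common neighbors. -/
/-!
`AQ_n` is a Cayley graph of `(ℤ/2)^n`: `x ~ w` iff the set `flipSet x w` of coordinates where they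
differ is a generator, i.e. a singleton `{a}` or an initial segment `Iic a` with `a ≥ 1`.
Transporting along the bijection `flipSet x`, the common neighbours of `x` and `y` correspond to
the generators `D` for which `D ∆ flipSet x y` is again a generator. For `x = ū^i`, `y = ū^j`
we have `flipSet x y = Ioc i j`, and the solutions are `D = Iic i`, `D = Iic j` and, exactly when
`Ioc i j` has two elements, the two singletons inside it.
-/

open Set
open scoped symmDiff

lemma Set.Iic_symmDiff_Iic {α : Type*} [LinearOrder α] (a b : α) :
    Iic a ∆ Iic b = uIoc a b := by
  wlog h : a ≤ b generalizing a b
  · rw [symmDiff_comm, uIoc_comm]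
    exact this b a (le_of_not_ge h)
  ext x
  simp only [mem_symmDiff, mem_Iic, uIoc_of_le h, mem_Ioc]
  constructor
  · rintro (⟨hxa, hxb⟩ | ⟨hxb, hxa⟩)
    exacts [absurd (hxa.trans h) hxb, ⟨not_le.1 hxa, hxb⟩]
  · rintro ⟨hax, hxb⟩
    exact Or.inr ⟨hxb, not_le.2 hax⟩

lemma Set.eq_or_eq_of_Iic_symmDiff_Iic_eq_Ioc {α : Type*} [LinearOrder α] {a b i j : α}
    (hij : i < j) (h : Iic a ∆ Iic b = Ioc i j) : a = i ∨ a = j := by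
  rw [Iic_symmDiff_Iic, uIoc, Ioc_eq_Ioc_iff (Or.inr hij)] at h
  rcases le_total a b with hab | hab
  · exact Or.inl (by simpa [hab] using h.1)
  · exact Or.inr (by simpa [hab] using h.2)

namespace Fin

variable {n : ℕ}

lemma ncard_Ioc (i j : Fin n) : (Ioc i j).ncard = j - i := by
  rw [← Finset.coe_Ioc, ncard_coe_finset, card_Ioc]

lemma val_eq_add_two_of_singleton_symmDiff_singleton_eq_Ioc {a b i j : Fin n} (hij : i < j)
    (h : {a} ∆ {b} = Ioc i j) : j.val = i.val + 2 ∧ a ∈ Ioc i j := by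
  have hab : a ≠ b := by
    rintro rfl
    rw [symmDiff_self] at h
    exact (nonempty_Ioc.2 hij).ne_empty h.symm
  have hpair : ({a} : Set (Fin n)) ∆ {b} = {a, b} := by
    ext k
    simp only [mem_symmDiff, mem_singleton_iff, mem_insert_iff]
    constructor
    · tauto
    · rintro (rfl | rfl) <;> simp [hab, hab.symm]
  refine ⟨?_, h ▸ by simp [hpair]⟩
  have hcard := congrArg ncard h
  rw [hpair, ncard_pair hab, ncard_Ioc] at hcard
  omega

lemma singleton_symmDiff_Iic_ne_Ioc {a b i j : Fin n} (hi : 1 ≤ i.val) (hb : 1 ≤ b.val) :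
    {a} ∆ Iic b ≠ Ioc i j := by
  intro h
  have h0 := Set.ext_iff.1 h ⟨0, by omega⟩
  have h1 := Set.ext_iff.1 h ⟨1, by omega⟩
  simp only [mem_symmDiff, mem_singleton_iff, mem_Iic, mem_Ioc, Fin.ext_iff, Fin.le_def,
    Fin.lt_def] at h0 h1
  omega

end Fin

variable {n : ℕ}

def flipSet (x y : Fin n → Bool) : Set (Fin n) := {k | x k ≠ y k}

lemma flipSet_comm (x y : Fin n → Bool) : flipSet x y = flipSet y x := by
  ext k; exact ne_comm

lemma flipSet_symmDiff_flipSet (w x y : Fin n → Bool) :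
    flipSet w x ∆ flipSet w y = flipSet x y := by
  ext k
  simp only [flipSet, mem_symmDiff, mem_ofPred_eq]
  cases w k <;> cases x k <;> cases y k <;> decide

lemma flipSet_bijective (x : Fin n → Bool) : Function.Bijective (flipSet x) := by
  classical
  refine ⟨fun w w' h => funext fun k => ?_, fun D => ⟨fun k => xor (x k) (decide (k ∈ D)), ?_⟩⟩
  · have hk := Set.ext_iff.1 h k
    simp only [flipSet, mem_ofPred_eq] at hk
    revert hk
    cases x k <;> cases w k <;> cases w' k <;> simp
  · ext k
    simp only [flipSet, mem_ofPred_eq]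
    cases x k <;> by_cases hk : k ∈ D <;> simp [hk]

lemma flipSet_hFlip (x : Fin n → Bool) (a : Fin n) : flipSet x (hFlip x a) = {a} := by
  ext k
  simp only [flipSet, hFlip, mem_ofPred_eq, mem_singleton_iff]
  split_ifs <;> simp_all

lemma flipSet_cFlip (x : Fin n → Bool) (a : Fin n) : flipSet x (cFlip x a) = Iic a := by
  ext k
  simp only [flipSet, cFlip, mem_ofPred_eq, mem_Iic]
  split_ifs <;> simp_all

lemma flipSet_cFlip_cFlip (u : Fin n → Bool) {i j : Fin n} (hij : i ≤ j) :
    flipSet (cFlip u i) (cFlip u j) = Ioc i j := by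
  rw [← flipSet_symmDiff_flipSet u (cFlip u i), flipSet_cFlip, flipSet_cFlip, Iic_symmDiff_Iic,
    uIoc_of_le hij]

def aqnFlipSets (n : ℕ) : Set (Set (Fin n)) :=
  {D | (∃ a, D = {a}) ∨ ∃ a : Fin n, 1 ≤ a.val ∧ D = Iic a}

lemma AQn_adj_iff (x w : Fin n → Bool) : (AQn n).Adj x w ↔ flipSet x w ∈ aqnFlipSets n := by
  constructor
  · rintro ⟨-, ⟨a, rfl⟩ | ⟨a, ha, rfl⟩⟩
    · exact Or.inl ⟨a, flipSet_hFlip x a⟩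
    · exact Or.inr ⟨a, ha, flipSet_cFlip x a⟩
  · have hne : flipSet x w ≠ ∅ → x ≠ w := by
      rintro h rfl
      exact h (by ext; simp [flipSet])
    rintro (⟨a, h⟩ | ⟨a, ha, h⟩)
    · obtain rfl := (flipSet_bijective x).1 (h.trans (flipSet_hFlip x a).symm)
      exact ⟨hne (by simp [h]), Or.inl ⟨a, rfl⟩⟩
    · obtain rfl := (flipSet_bijective x).1 (h.trans (flipSet_cFlip x a).symm)
      exact ⟨hne (h ▸ nonempty_Iic.ne_empty), Or.inr ⟨a, ha, rfl⟩⟩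

lemma image_flipSet_commonNeighbors (x y : Fin n → Bool) :
    flipSet x '' (AQn n).commonNeighbors x y =
      {D ∈ aqnFlipSets n | D ∆ flipSet x y ∈ aqnFlipSets n} := by
  have hflip : ∀ w, flipSet y w = flipSet x w ∆ flipSet x y := fun w => by
    rw [flipSet_symmDiff_flipSet, flipSet_comm]
  ext D
  constructor
  · rintro ⟨w, hw, rfl⟩
    rw [SimpleGraph.mem_commonNeighbors, AQn_adj_iff, AQn_adj_iff, hflip] at hw
    exact hw
  · rintro hD
    obtain ⟨w, rfl⟩ := (flipSet_bijective x).2 D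
    refine ⟨w, ?_, rfl⟩
    rw [SimpleGraph.mem_commonNeighbors, AQn_adj_iff, AQn_adj_iff, hflip]
    exact hD

lemma mem_aqnFlipSets_symmDiff_Ioc_iff {i j : Fin n} (hi : 1 ≤ i.val) (hij : i < j)
    (D : Set (Fin n)) :
    D ∈ aqnFlipSets n ∧ D ∆ Ioc i j ∈ aqnFlipSets n ↔
      D = Iic i ∨ D = Iic j ∨ (j.val = i.val + 2 ∧ ∃ a ∈ Ioc i j, D = {a}) := by
  constructor
  · rintro ⟨hD, hE⟩
    have hDE : D ∆ (D ∆ Ioc i j) = (Ioc i j : Set (Fin n)) := symmDiff_symmDiff_cancel_left D _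
    rcases hD with ⟨a, rfl⟩ | ⟨a, ha, rfl⟩ <;> rcases hE with ⟨b, hE⟩ | ⟨b, hb, hE⟩ <;>
      rw [hE] at hDE
    · obtain ⟨hj, ha⟩ := Fin.val_eq_add_two_of_singleton_symmDiff_singleton_eq_Ioc hij hDE
      exact Or.inr (Or.inr ⟨hj, a, ha, rfl⟩)
    · exact (Fin.singleton_symmDiff_Iic_ne_Ioc hi hb hDE).elim
    · rw [symmDiff_comm] at hDE
      exact (Fin.singleton_symmDiff_Iic_ne_Ioc hi ha hDE).elim
    · rcases eq_or_eq_of_Iic_symmDiff_Iic_eq_Ioc hij hDE with rfl | rfl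
      exacts [Or.inl rfl, Or.inr (Or.inl rfl)]
  · have hIic : Iic i ∆ Iic j = Ioc i j := by rw [Iic_symmDiff_Iic, uIoc_of_le hij.le]
    have hj : 1 ≤ j.val := hi.trans (Fin.le_def.1 hij.le)
    rintro (rfl | rfl | ⟨hji, a, ha, rfl⟩)
    · refine ⟨Or.inr ⟨i, hi, rfl⟩, Or.inr ⟨j, hj, ?_⟩⟩
      rw [← hIic, symmDiff_symmDiff_cancel_left]
    · refine ⟨Or.inr ⟨j, hj, rfl⟩, Or.inr ⟨i, hi, ?_⟩⟩
      rw [← hIic, symmDiff_comm (Iic i), symmDiff_symmDiff_cancel_left]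
    · refine ⟨Or.inl ⟨a, rfl⟩, Or.inl (ncard_eq_one.1 ?_)⟩
      rw [symmDiff_of_le (singleton_subset_iff.2 ha), ncard_sdiff_singleton_of_mem ha,
        Fin.ncard_Ioc]
      omega

lemma ncard_aqnFlipSets_symmDiff_Ioc {i j : Fin n} (hi : 1 ≤ i.val) (hij : i < j) :
    {D ∈ aqnFlipSets n | D ∆ Ioc i j ∈ aqnFlipSets n}.ncard = if j.val = i.val + 2 then 4 else 2 := by
  have hset : {D ∈ aqnFlipSets n | D ∆ Ioc i j ∈ aqnFlipSets n} =
      {Iic i, Iic j} ∪ {D | j.val = i.val + 2 ∧ ∃ a ∈ Ioc i j, D = {a}} := by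
    ext D
    simpa only [mem_sep_iff, mem_union, mem_insert_iff, mem_singleton_iff, mem_ofPred_eq,
      or_assoc] using mem_aqnFlipSets_symmDiff_Ioc_iff hi hij D
  have hpair : ({Iic i, Iic j} : Set (Set (Fin n))).ncard = 2 :=
    ncard_pair (Iic_injective.ne hij.ne)
  split_ifs with hj
  · have hsing : {D : Set (Fin n) | j.val = i.val + 2 ∧ ∃ a ∈ Ioc i j, D = {a}} =
        (singleton '' Ioc i j : Set (Set (Fin n))) := by
      ext D
      simp [hj, eq_comm]
    have hdisj : Disjoint ({Iic i, Iic j} : Set (Set (Fin n))) (singleton '' Ioc i j) := by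
      refine disjoint_left.2 fun D hD ⟨a, ha, haD⟩ => ha.1.ne ?_
      rw [← mem_singleton_iff, haD]
      rcases hD with rfl | rfl
      exacts [mem_Iic.2 le_rfl, mem_Iic.2 hij.le]
    rw [hset, hsing, ncard_union_eq hdisj, hpair, ncard_image_of_injective _ singleton_injective,
      Fin.ncard_Ioc]
    omega
  · have hempty : {D : Set (Fin n) | j.val = i.val + 2 ∧ ∃ a ∈ Ioc i j, D = {a}} = ∅ := by
      simp [hj]
    rw [hset, hempty, union_empty, hpair]

lemma ncard_commonNeighbors_cFlip_cFlip (u : Fin n → Bool) {i j : Fin n} (hi : 1 ≤ i.val)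
    (hij : i < j) :
    ((AQn n).commonNeighbors (cFlip u i) (cFlip u j)).ncard =
      if j.val = i.val + 2 then 4 else 2 := by
  rw [← ncard_image_of_injective _ (flipSet_bijective _).1, image_flipSet_commonNeighbors,
    flipSet_cFlip_cFlip u hij.le, ncard_aqnFlipSets_symmDiff_Ioc hi hij]

theorem stmt15_general (n : ℕ) (u : Fin n → Bool) (i j : Fin n)
    (hi : 1 ≤ i.val) (hij : i.val < j.val) :
    (((AQn n).neighborSet (cFlip u i) ∩ (AQn n).neighborSet (cFlip u j)).ncard = 4 ↔
      j.val = i.val + 2) ∧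
    (j.val = i.val + 1 ∨ i.val + 2 < j.val →
      ((AQn n).neighborSet (cFlip u i) ∩ (AQn n).neighborSet (cFlip u j)).ncard = 2) := by
  rw [← SimpleGraph.commonNeighbors_eq, ncard_commonNeighbors_cFlip_cFlip u hi hij]
  split_ifs <;> omega

/-- for two complement edges `u ū^i`, `u ū^j` of `AQ_n` (`n ≥ 3`) with
`i < j` (indices `i j : Fin n`, `1 ≤ i.val`, encoding 1-based bits `≥ 2`), `ū^i` and
`ū^j` have exactly 4 common neighbours iff `j = i + 2`; if `j = i+1` or `j > i+2` they
have exactly 2 common neighbours. -/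
theorem stmt15 (n : ℕ) (hn : 3 ≤ n) (u : Fin n → Bool) (i j : Fin n)
    (hi : 1 ≤ i.val) (hij : i.val < j.val) :
    (((AQn n).neighborSet (cFlip u i) ∩ (AQn n).neighborSet (cFlip u j)).ncard = 4 ↔
      j.val = i.val + 2) ∧
    (j.val = i.val + 1 ∨ i.val + 2 < j.val →
      ((AQn n).neighborSet (cFlip u i) ∩ (AQn n).neighborSet (cFlip u j)).ncard = 2) :=
  stmt15_general n u i j hi hij
end
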